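/- arXiv:2109.05247 — 2 statements merged into one kernel-verified Lean document; each statement's English description precedes it below -/
import Mathlib

section
/- Let n > 2, and α ∈ [max{1/4, 1/(n−1)}, 1/2], p = 1/(2α), and suppose τ : (0, π/2) → [0,1) is a C² solution of τ'(s) = n (tan s)^(n−1) (1 − τ(s)^(2/n))^p with τ(s) → 0 as s → 0 and τ increasing. Then τ' is bounded on (0, π/2). -/
open Set Real Filter

set_option maxHeartbeats 1000000

/-- For n > 2, α ∈ [max{1/4, 1/(n−1)}, 1/2], p = 1/(2α), if τ : (0,π/2) → [0,1) is a
C² increasing solution of τ' = n (tan s)^(n−1) (1 − τ^(2/n))^p with τ → 0 at 0,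
then τ' is bounded on (0, π/2). -/
theorem stmt_14 (n : ℕ) (hn : 2 < n) (α p : ℝ)
    (hα : α ∈ Set.Icc (max (1/4) (1/((n : ℝ) - 1))) (1/2))
    (hp : p = 1/(2*α)) (τ : ℝ → ℝ)
    (hC2 : ContDiffOn ℝ 2 τ (Set.Ioo 0 (π/2)))
    (hrange : ∀ s ∈ Set.Ioo (0:ℝ) (π/2), τ s ∈ Set.Ico (0:ℝ) 1)
    (hODE : ∀ s ∈ Set.Ioo (0:ℝ) (π/2),
      HasDerivAt τ ((n : ℝ) * Real.tan s ^ (n - 1) * (1 - τ s ^ ((2:ℝ)/n)) ^ p) s)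
    (hτ0 : Tendsto τ (nhdsWithin 0 (Set.Ioi 0)) (nhds 0))
    (hmono : MonotoneOn τ (Set.Ioo (0:ℝ) (π/2))) :
    ∃ C : ℝ, ∀ s ∈ Set.Ioo (0:ℝ) (π/2),
      (n : ℝ) * Real.tan s ^ (n - 1) * (1 - τ s ^ ((2:ℝ)/n)) ^ p ≤ C := by
  clear hC2 hτ0 hmono
  obtain ⟨k, rfl⟩ : ∃ k, n = k + 3 := ⟨n - 3, by omega⟩
  clear hn
  obtain ⟨hαl, hαu⟩ := hα
  -- basic numeric facts
  have hk2 : (0:ℝ) < (k:ℝ) + 2 := by positivity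
  have hk1 : (0:ℝ) < (k:ℝ) + 1 := by positivity
  have hN : ((k+3:ℕ):ℝ) = (k:ℝ) + 3 := by push_cast; ring
  have hα4 : (1:ℝ)/4 ≤ α := le_trans (le_max_left _ _) hαl
  have hαk : 1/((k:ℝ)+2) ≤ α := by
    have := le_trans (le_max_right _ _) hαl
    rwa [hN, show (k:ℝ)+3-1 = (k:ℝ)+2 by ring] at this
  have hαpos : 0 < α := lt_of_lt_of_le (by norm_num) hα4
  have hp1 : 1 ≤ p := by
    rw [hp, le_div_iff₀ (by positivity)]; linarith
  have hppos : 0 < p := lt_of_lt_of_le one_pos hp1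
  have hαk' : 1 ≤ α * ((k:ℝ)+2) := by
    rw [div_le_iff₀ hk2] at hαk; linarith
  have hpk : p ≤ (k:ℝ) + 2 := by
    rw [hp, div_le_iff₀ (by positivity)]
    nlinarith
  -- constants
  set e : ℝ := (2:ℝ)/((k+3:ℕ):ℝ) with he_def
  have hNpos0 : (0:ℝ) < ((k+3:ℕ):ℝ) := by rw [hN]; positivity
  have hepos : 0 < e := by rw [he_def]; positivity
  have he1 : e ≤ 1 := by rw [he_def, div_le_one hNpos0, hN]; linarith
  have heN : ((k+3:ℕ):ℝ) * e = 2 := by rw [he_def]; field_simp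
  set r : ℝ := p * ((k:ℝ)+1) / ((k:ℝ)+2) with hr_def
  have hrpos : 0 < r := by positivity
  set c : ℝ := p / ((k:ℝ)+2) with hc_def
  have hcpos : 0 < c := by positivity
  set w : ℝ := ((k:ℝ)+2)/((k:ℝ)+1) with hw_def
  have hwpos : 0 < w := by positivity
  have hrw : r * w = p := by rw [hr_def, hw_def]; field_simp
  have hck : 2 * (c * ((k:ℝ)+1)) = 2 * r := by rw [hc_def, hr_def]; field_simp
  have hpq : p ≤ r + 1 := by
    rw [hr_def]
    rw [div_add' _ _ _ hk2.ne', le_div_iff₀ hk2]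
    nlinarith
  -- functions
  set u : ℝ → ℝ := fun s => 1 - τ s ^ e with hu_def
  set D : ℝ → ℝ := fun s => ((k+3:ℕ):ℝ) * Real.tan s ^ (k+2) * u s ^ p with hD_def
  have hODE' : ∀ s ∈ Set.Ioo (0:ℝ) (π/2), HasDerivAt τ (D s) s := hODE
  -- pointwise positivity facts
  have hsub : ∀ s : ℝ, s ∈ Set.Ioo (0:ℝ) (π/2) → 0 < Real.tan s := fun s hs =>
    Real.tan_pos_of_pos_of_lt_pi_div_two hs.1 hs.2
  have hu_pos : ∀ s ∈ Set.Ioo (0:ℝ) (π/2), 0 < u s := by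
    intro s hs
    have h := hrange s hs
    have : τ s ^ e < 1 := Real.rpow_lt_one h.1 h.2 hepos
    simp only [hu_def]; linarith
  have hu_le1 : ∀ s ∈ Set.Ioo (0:ℝ) (π/2), u s ≤ 1 := by
    intro s hs
    have : 0 ≤ τ s ^ e := Real.rpow_nonneg (hrange s hs).1 _
    simp only [hu_def]; linarith
  have hDpos : ∀ s ∈ Set.Ioo (0:ℝ) (π/2), 0 < D s := by
    intro s hs
    have h1 := hsub s hs
    have h2 := hu_pos s hs
    have : (0:ℝ) < ((k+3:ℕ):ℝ) := by rw [hN]; positivity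
    exact mul_pos (mul_pos this (pow_pos h1 _)) (Real.rpow_pos_of_pos h2 _)
  -- τ is strictly positive on the interval
  have hsm : StrictMonoOn τ (Set.Ioo (0:ℝ) (π/2)) := by
    apply strictMonoOn_of_deriv_pos (convex_Ioo _ _)
    · exact fun s hs => ((hODE' s hs).continuousAt).continuousWithinAt
    · intro s hs
      rw [interior_Ioo] at hs
      rw [(hODE' s hs).deriv]
      exact hDpos s hs
  have hτpos : ∀ s ∈ Set.Ioo (0:ℝ) (π/2), 0 < τ s := by
    intro s hs
    have h2 : s/2 ∈ Set.Ioo (0:ℝ) (π/2) := ⟨by linarith [hs.1], by linarith [hs.1, hs.2]⟩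
    have := hsm h2 hs (by linarith [hs.1])
    have := (hrange _ h2).1
    linarith
  -- derivative of u
  have hu' : ∀ s ∈ Set.Ioo (0:ℝ) (π/2),
      HasDerivAt u (-(D s * e * τ s ^ (e-1))) s := by
    intro s hs
    exact ((hODE' s hs).rpow_const (Or.inl (hτpos s hs).ne')).const_sub 1
  -- key derivative lower bound for u':  -(D*e*τ^{e-1}) ≤ -2 tan^{k+2} u^{r+1}
  have hu'le : ∀ s ∈ Set.Ioo (0:ℝ) (π/2),
      2 * Real.tan s ^ (k+2) * u s ^ (r+1) ≤ D s * e * τ s ^ (e-1) := by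
    intro s hs
    have hτ1 : 1 ≤ τ s ^ (e-1) :=
      Real.one_le_rpow_of_pos_of_le_one_of_nonpos (hτpos s hs) (hrange s hs).2.le
        (by linarith)
    have huq : u s ^ (r+1) ≤ u s ^ p :=
      Real.rpow_le_rpow_of_exponent_ge (hu_pos s hs) (hu_le1 s hs) hpq
    have hDe : D s * e = 2 * Real.tan s ^ (k+2) * u s ^ p := by
      simp only [hD_def]
      linear_combination (Real.tan s ^ (k+2) * u s ^ p) * heN
    calc 2 * Real.tan s ^ (k+2) * u s ^ (r+1)
        ≤ 2 * Real.tan s ^ (k+2) * u s ^ p := by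
          have := hsub s hs
          gcongr
      _ = D s * e := hDe.symm
      _ ≤ D s * e * τ s ^ (e-1) :=
          le_mul_of_one_le_right (mul_pos (hDpos s hs) hepos).le hτ1
  -- v := u ^ (-r)
  set v : ℝ → ℝ := fun s => u s ^ (-r) with hv_def
  have hv' : ∀ s ∈ Set.Ioo (0:ℝ) (π/2),
      HasDerivAt v ((-(D s * e * τ s ^ (e-1))) * (-r) * u s ^ (-r-1)) s := by
    intro s hs
    exact (hu' s hs).rpow_const (Or.inl (hu_pos s hs).ne')
  have hv'ge : ∀ s ∈ Set.Ioo (0:ℝ) (π/2),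
      2 * r * Real.tan s ^ (k+2) ≤ (-(D s * e * τ s ^ (e-1))) * (-r) * u s ^ (-r-1) := by
    intro s hs
    have h1 := hu'le s hs
    have hup := hu_pos s hs
    have h2 : 0 ≤ r * u s ^ (-r-1) := by positivity
    have h3 : (2 * Real.tan s ^ (k+2) * u s ^ (r+1)) * (r * u s ^ (-r-1)) ≤
        (D s * e * τ s ^ (e-1)) * (r * u s ^ (-r-1)) := mul_le_mul_of_nonneg_right h1 h2
    calc 2 * r * Real.tan s ^ (k+2)
        = (2 * Real.tan s ^ (k+2) * u s ^ (r+1)) * (r * u s ^ (-r-1)) := by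
          have : u s ^ (r+1) * u s ^ (-r-1) = 1 := by
            rw [← Real.rpow_add hup]
            norm_num
          linear_combination (-(2 * r * Real.tan s ^ (k+2))) * this
      _ ≤ (D s * e * τ s ^ (e-1)) * (r * u s ^ (-r-1)) := h3
      _ = (-(D s * e * τ s ^ (e-1))) * (-r) * u s ^ (-r-1) := by ring
  -- T := tan ^ (k+1)
  set T : ℝ → ℝ := fun s => Real.tan s ^ (k+1) with hT_def
  have hT' : ∀ s ∈ Set.Ioo (0:ℝ) (π/2),
      HasDerivAt T ((↑(k+1) : ℝ) * Real.tan s ^ k * (1 / Real.cos s ^ 2)) s := by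
    intro s hs
    have hcos : 0 < Real.cos s :=
      Real.cos_pos_of_mem_Ioo ⟨by linarith [pi_pos, hs.1], hs.2⟩
    exact (Real.hasDerivAt_tan hcos.ne').pow (k+1)
  -- G := v - c * T is monotone on [π/4, π/2)
  set G : ℝ → ℝ := fun s => v s - c * T s with hG_def
  set G' : ℝ → ℝ := fun s => (-(D s * e * τ s ^ (e-1))) * (-r) * u s ^ (-r-1)
      - c * ((↑(k+1) : ℝ) * Real.tan s ^ k * (1 / Real.cos s ^ 2)) with hG'_def
  have hG' : ∀ s ∈ Set.Ioo (0:ℝ) (π/2), HasDerivAt G (G' s) s := by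
    intro s hs
    exact (hv' s hs).sub ((hT' s hs).const_mul c)
  have hsubset : Set.Ico (π/4) (π/2) ⊆ Set.Ioo (0:ℝ) (π/2) := by
    intro x hx
    constructor
    · linarith [pi_pos, hx.1]
    · exact hx.2
  have hmonoG : MonotoneOn G (Set.Ico (π/4) (π/2)) := by
    apply monotoneOn_of_hasDerivWithinAt_nonneg (convex_Ico _ _)
      (f' := G')
    · exact fun s hs => ((hG' s (hsubset hs)).continuousAt).continuousWithinAt
    · intro s hs
      rw [interior_Ico] at hs
      exact (hG' s (hsubset (Set.Ioo_subset_Ico_self hs))).hasDerivWithinAt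
    · intro s hs
      rw [interior_Ico] at hs
      have hs' : s ∈ Set.Ioo (0:ℝ) (π/2) := hsubset (Set.Ioo_subset_Ico_self hs)
      have htan1 : 1 ≤ Real.tan s := by
        have := Real.tan_lt_tan_of_lt_of_lt_pi_div_two (by linarith [pi_pos]) hs'.2 hs.1
        rw [Real.tan_pi_div_four] at this
        linarith
      have hcos : 0 < Real.cos s :=
        Real.cos_pos_of_mem_Ioo ⟨by linarith [pi_pos, hs'.1], hs'.2⟩
      have hsec : 1 / Real.cos s ^ 2 = 1 + Real.tan s ^ 2 := by
        rw [one_div, ← Real.inv_one_add_tan_sq hcos.ne', inv_inv]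
      have hpowk : Real.tan s ^ k ≤ Real.tan s ^ (k+2) :=
        pow_le_pow_right₀ htan1 (by omega)
      have hTder : c * ((↑(k+1) : ℝ) * Real.tan s ^ k * (1 / Real.cos s ^ 2)) ≤
          2 * r * Real.tan s ^ (k+2) := by
        rw [hsec]
        have e1 : Real.tan s ^ k * (1 + Real.tan s ^ 2) =
            Real.tan s ^ k + Real.tan s ^ (k+2) := by ring
        have e2 : Real.tan s ^ k + Real.tan s ^ (k+2) ≤ 2 * Real.tan s ^ (k+2) := by
          linarith
        calc c * ((↑(k+1) : ℝ) * Real.tan s ^ k * (1 + Real.tan s ^ 2))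
            = (c * (↑(k+1) : ℝ)) * (Real.tan s ^ k + Real.tan s ^ (k+2)) := by
              push_cast; ring
          _ ≤ (c * (↑(k+1) : ℝ)) * (2 * Real.tan s ^ (k+2)) := by
              have h0 : (0:ℝ) ≤ c * ((k:ℝ)+1) := by positivity
              push_cast
              exact mul_le_mul_of_nonneg_left e2 h0
          _ = 2 * r * Real.tan s ^ (k+2) := by
              push_cast
              linear_combination (Real.tan s ^ (k+2)) * hck
      have := hv'ge s hs'
      simp only [hG'_def]
      linarith
  -- evaluate at π/4
  have hpi4 : (π/4 : ℝ) ∈ Set.Ico (π/4) (π/2) := ⟨le_refl _, by linarith [pi_pos]⟩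
  have hpi4' : (π/4 : ℝ) ∈ Set.Ioo (0:ℝ) (π/2) := hsubset hpi4
  have hT4 : T (π/4) = 1 := by simp [hT_def, Real.tan_pi_div_four]
  have hv4 : 0 < v (π/4) := Real.rpow_pos_of_pos (hu_pos _ hpi4') _
  -- choose s2 = arctan 2
  set s2 : ℝ := Real.arctan 2 with hs2_def
  have hs2mem : s2 ∈ Set.Ico (π/4) (π/2) := by
    constructor
    · rw [← Real.arctan_one]
      exact (Real.arctan_strictMono (by norm_num)).le
    · exact Real.arctan_lt_pi_div_two 2
  have htan_s2 : Real.tan s2 = 2 := Real.tan_arctan 2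
  -- the bound
  refine ⟨((k+3:ℕ):ℝ) * 2 ^ (k+2) + ((k+3:ℕ):ℝ) * (2/c) ^ w, ?_⟩
  intro s hs
  have hNpos : (0:ℝ) < ((k+3:ℕ):ℝ) := by rw [hN]; positivity
  have hwnn : (0:ℝ) ≤ (2/c) ^ w := Real.rpow_nonneg (by positivity) _
  have htpos := hsub s hs
  have hupos := hu_pos s hs
  rcases le_or_gt s s2 with hcase | hcase
  · -- easy region: tan s ≤ 2
    have htle : Real.tan s ≤ 2 := by
      rcases eq_or_lt_of_le hcase with hh | hh
      · rw [hh, htan_s2]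
      · have := Real.tan_lt_tan_of_lt_of_lt_pi_div_two (by linarith [pi_pos, hs.1])
          (hs2mem.2) hh
        rw [htan_s2] at this
        linarith
    have h1 : Real.tan s ^ (k+2) ≤ 2 ^ (k+2) := pow_le_pow_left₀ htpos.le htle _
    have h2 : u s ^ p ≤ 1 := Real.rpow_le_one hupos.le (hu_le1 s hs) hppos.le
    have : ((k+3:ℕ):ℝ) * Real.tan s ^ (k+2) * u s ^ p ≤ ((k+3:ℕ):ℝ) * 2 ^ (k+2) := by
      calc ((k+3:ℕ):ℝ) * Real.tan s ^ (k+2) * u s ^ p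
          ≤ ((k+3:ℕ):ℝ) * 2 ^ (k+2) * 1 := by
            apply mul_le_mul _ h2 (Real.rpow_nonneg hupos.le _) (by positivity)
            exact mul_le_mul_of_nonneg_left h1 hNpos.le
        _ = ((k+3:ℕ):ℝ) * 2 ^ (k+2) := mul_one _
    calc ((k+3:ℕ):ℝ) * Real.tan s ^ (k+3-1) * (1 - τ s ^ ((2:ℝ)/((k+3:ℕ):ℝ))) ^ p
        = ((k+3:ℕ):ℝ) * Real.tan s ^ (k+2) * u s ^ p := rfl
      _ ≤ ((k+3:ℕ):ℝ) * 2 ^ (k+2) := this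
      _ ≤ _ := by linarith [mul_nonneg hNpos.le hwnn]
  · -- hard region: s > s2 ≥ π/4
    have hsmem : s ∈ Set.Ico (π/4) (π/2) := ⟨le_trans hs2mem.1 hcase.le, hs.2⟩
    have hGmono := hmonoG hpi4 hsmem (le_trans hs2mem.1 hcase.le)
    -- tan s ≥ 2, so T s ≥ 2
    have hs2lb : -(π/2) < s2 := by
      have h := hs2mem.1
      linarith [pi_pos]
    have htange : 2 ≤ Real.tan s := by
      have := Real.tan_lt_tan_of_lt_of_lt_pi_div_two hs2lb hs.2 hcase
      rw [htan_s2] at this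
      linarith
    have hTge : 2 ≤ T s := by
      have : (2:ℝ) ^ (k+1) ≤ Real.tan s ^ (k+1) := pow_le_pow_left₀ (by norm_num) htange _
      have h21 : (2:ℝ) ≤ 2 ^ (k+1) := by
        calc (2:ℝ) = 2^1 := (pow_one 2).symm
        _ ≤ 2^(k+1) := pow_le_pow_right₀ (by norm_num) (by omega)
      simp only [hT_def]
      linarith
    have hTpos : 0 < T s := lt_of_lt_of_le (by norm_num) hTge
    -- v s ≥ c * T s / 2
    have hvge : c * T s / 2 ≤ v s := by
      have h1 : v (π/4) - c * T (π/4) ≤ v s - c * T s := hGmono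
      rw [hT4] at h1
      have h2 : 0 ≤ c * (T s - 2) := mul_nonneg hcpos.le (by linarith)
      nlinarith [hv4]
    -- u s ^ r ≤ 2 / (c * T s)
    have hvs : v s = (u s ^ r)⁻¹ := by
      simp only [hv_def]
      rw [Real.rpow_neg hupos.le]
    have hurpos : 0 < u s ^ r := Real.rpow_pos_of_pos hupos _
    have hctpos : 0 < c * T s / 2 := by positivity
    have hur : u s ^ r ≤ 2 / (c * T s) := by
      have h1 : u s ^ r * (c * T s / 2) ≤ u s ^ r * (u s ^ r)⁻¹ := by
        rw [← hvs]
        exact mul_le_mul_of_nonneg_left hvge hurpos.le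
      rw [mul_inv_cancel₀ hurpos.ne'] at h1
      rw [le_div_iff₀ (by positivity)]
      linarith [h1]
    -- final computation
    have hup_eq : u s ^ p = (u s ^ r) ^ w := by
      rw [← hrw, Real.rpow_mul hupos.le]
    have hkw : (((k+2:ℕ)):ℝ) = ((k:ℝ)+1) * w := by
      rw [hw_def]; push_cast; field_simp
    have htan_eq : Real.tan s ^ (k+2) = (T s) ^ w := by
      calc Real.tan s ^ (k+2) = Real.tan s ^ (((k+2:ℕ)):ℝ) := (Real.rpow_natCast _ _).symm
        _ = Real.tan s ^ (((k:ℝ)+1) * w) := by rw [hkw]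
        _ = (Real.tan s ^ ((k:ℝ)+1)) ^ w := Real.rpow_mul htpos.le _ _
        _ = (T s) ^ w := by
            rw [show ((k:ℝ)+1) = ((k+1:ℕ):ℝ) by push_cast; ring, Real.rpow_natCast]
    have hmulT : T s * (2/(c * T s)) = 2/c := by
      field_simp
    have h2 : u s ^ p ≤ (2/(c * T s)) ^ w := by
      rw [hup_eq]
      exact Real.rpow_le_rpow hurpos.le hur hwpos.le
    have hfinal : ((k+3:ℕ):ℝ) * Real.tan s ^ (k+2) * u s ^ p ≤ ((k+3:ℕ):ℝ) * (2/c) ^ w := by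
      calc ((k+3:ℕ):ℝ) * Real.tan s ^ (k+2) * u s ^ p
          ≤ ((k+3:ℕ):ℝ) * (T s) ^ w * (2/(c * T s)) ^ w := by
            rw [htan_eq]
            exact mul_le_mul_of_nonneg_left h2 (by positivity)
        _ = ((k+3:ℕ):ℝ) * (T s * (2/(c * T s))) ^ w := by
            rw [Real.mul_rpow hTpos.le (by positivity), mul_assoc]
        _ = ((k+3:ℕ):ℝ) * (2/c) ^ w := by rw [hmulT]
    calc ((k+3:ℕ):ℝ) * Real.tan s ^ (k+3-1) * (1 - τ s ^ ((2:ℝ)/((k+3:ℕ):ℝ))) ^ p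
        = ((k+3:ℕ):ℝ) * Real.tan s ^ (k+2) * u s ^ p := rfl
      _ ≤ ((k+3:ℕ):ℝ) * (2/c) ^ w := hfinal
      _ ≤ _ := by
          have h0 : (0:ℝ) ≤ ((k+3:ℕ):ℝ) * 2 ^ (k+2) := by positivity
          linarith
end

section
/- Let n > 2, α with α(n−1) ≥ 1, and let ρ : (0,π/2) → (0,1) satisfy ρ(s)^(n−1) ρ'(s) = (tan s)^(n−1) (1 − ρ(s)²)^(1/(2α)) with 0 < ρ'(s) < C for some constant C > 0. Then ρ(u)/√(1 − ρ(u)²) ≥ C^(−α) tan u for all u ∈ (0, π/2), and consequently ∫₀^s ρ(u)/√(1−ρ(u)²) du → +∞ as s → (π/2)⁻. -/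
open Set Real Filter MeasureTheory

noncomputable def arth (x : ℝ) : ℝ := (Real.log (1+x) - Real.log (1-x))/2

lemma hasDerivAt_arth {x : ℝ} (h1 : -1 < x) (h2 : x < 1) :
    HasDerivAt arth (1/(1-x^2)) x := by
  have h1' : (0:ℝ) < 1 + x := by linarith
  have h2' : (0:ℝ) < 1 - x := by linarith
  have d1 : HasDerivAt (fun y : ℝ => Real.log (1+y)) (1/(1+x)) x := by
    have h : HasDerivAt (fun y : ℝ => 1+y) 1 x := (hasDerivAt_id x).const_add 1
    simpa using h.log (ne_of_gt h1')
  have d2 : HasDerivAt (fun y : ℝ => Real.log (1-y)) ((-1)/(1-x)) x := by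
    have h : HasDerivAt (fun y : ℝ => 1-y) (-1) x := (hasDerivAt_id x).neg.const_add 1
    exact h.log (ne_of_gt h2')
  have := (d1.sub d2).div_const 2
  refine this.congr_deriv ?_
  have hx2 : 1 - x^2 = (1+x)*(1-x) := by ring
  rw [hx2]
  field_simp
  ring

lemma arth_sub_arctan_mono {x y : ℝ} (hx : 0 ≤ x) (hxy : x ≤ y) (hy : y < 1) :
    arth x - Real.arctan x ≤ arth y - Real.arctan y := by
  have key : MonotoneOn (fun t => arth t - Real.arctan t) (Icc x y) := by
    apply monotoneOn_of_deriv_nonneg (convex_Icc x y)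
    · intro t ht
      have ht1 : -1 < t := by simp at ht; linarith [ht.1]
      have ht2 : t < 1 := by simp at ht; linarith [ht.2]
      exact (((hasDerivAt_arth ht1 ht2).sub (Real.hasDerivAt_arctan t)).continuousAt).continuousWithinAt
    · intro t ht
      rw [interior_Icc] at ht
      have ht1 : -1 < t := by simp at ht; linarith [ht.1]
      have ht2 : t < 1 := by simp at ht; linarith [ht.2]
      exact (((hasDerivAt_arth ht1 ht2).sub (Real.hasDerivAt_arctan t)).differentiableAt).differentiableWithinAt
    · intro t ht
      rw [interior_Icc] at ht
      have ht1 : -1 < t := by simp at ht; linarith [ht.1]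
      have ht2 : t < 1 := by simp at ht; linarith [ht.2]
      rw [HasDerivAt.deriv (f := fun t => arth t - Real.arctan t) ((hasDerivAt_arth ht1 ht2).sub (Real.hasDerivAt_arctan t))]
      have hq : (0:ℝ) < 1 - t^2 := by nlinarith
      have hq2 : (1:ℝ) - t^2 ≤ 1 + t^2 := by nlinarith
      have := one_div_le_one_div_of_le hq hq2
      linarith
  exact key (by simp [hx, hxy]) (by simp [hxy, le_of_lt hy]) hxy

lemma hasDerivAt_inner {c t : ℝ} (ht0 : 0 < t) (ht1 : t < 1) :
    HasDerivAt (fun y : ℝ => Real.arctan (c*y/Real.sqrt (1-y^2)))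
      (1/(1+(c*t/Real.sqrt (1-t^2))^2) * (c / ((1-t^2) * Real.sqrt (1-t^2)))) t := by
  have hq0 : (0:ℝ) < 1 - t^2 := by nlinarith
  set x := Real.sqrt (1 - t^2) with hxdef
  have hx0 : 0 < x := Real.sqrt_pos.2 hq0
  have hx2 : x^2 = 1 - t^2 := Real.sq_sqrt hq0.le
  have dsq : HasDerivAt (fun y : ℝ => 1 - y^2) (-(2*t)) t := by
    simpa using (hasDerivAt_pow 2 t).const_sub 1
  have dsqrt : HasDerivAt (fun y : ℝ => Real.sqrt (1-y^2)) (-(2*t) / (2*x)) t :=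
    dsq.sqrt (ne_of_gt hq0)
  have dinv : HasDerivAt (fun y : ℝ => (Real.sqrt (1-y^2))⁻¹) (-(-(2*t) / (2*x)) / x^2) t :=
    dsqrt.inv (ne_of_gt hx0)
  have dcy : HasDerivAt (fun y : ℝ => c*y) c t := by
    simpa using (hasDerivAt_id t).const_mul c
  have dw : HasDerivAt (fun y : ℝ => c*y * (Real.sqrt (1-y^2))⁻¹)
      (c * x⁻¹ + (c*t) * (-(-(2*t) / (2*x)) / x^2)) t := dcy.mul dinv
  have hval : c * x⁻¹ + (c*t) * (-(-(2*t) / (2*x)) / x^2) = c / ((1-t^2) * x) := by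
    rw [← hx2]
    have hsum : x^2 + t^2 = 1 := by rw [hx2]; ring
    field_simp
    linear_combination c * hsum
  have dw' : HasDerivAt (fun y : ℝ => c*y / (Real.sqrt (1-y^2)))
      (c / ((1-t^2) * x)) t := by
    rw [← hval]
    simpa [div_eq_mul_inv] using dw
  have := (Real.hasDerivAt_arctan (c*t/x)).comp t dw'
  simpa [Function.comp_def, div_eq_mul_inv] using this

set_option maxHeartbeats 1000000 in
lemma lemE {c r V : ℝ} (hc0 : 0 < c) (hc1 : c < 1) (hr0 : 0 < r) (hrc : r^2 < 1 - c^2)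
    (hV0 : 0 < V) (hV1 : V < 1) (hVc : 1 - V^2 ≤ c^2) :
    arth r - Real.arctan (c*r/Real.sqrt (1-r^2)) ≤ arth V - Real.arctan V := by
  have hc2 : (0:ℝ) < 1 - c^2 := by nlinarith
  set p := Real.sqrt (1-c^2) with hpdef
  have hp0 : 0 < p := Real.sqrt_pos.2 hc2
  have hp2 : p^2 = 1 - c^2 := Real.sq_sqrt hc2.le
  have hp1 : p < 1 := by nlinarith [sq_nonneg (p-1)]
  have hrp : r < p := lt_of_pow_lt_pow_left₀ 2 hp0.le (by nlinarith)
  have hpV : p ≤ V := le_of_pow_le_pow_left₀ two_ne_zero hV0.le (by nlinarith)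
  have step1 : arth p - Real.arctan p ≤ arth V - Real.arctan V :=
    arth_sub_arctan_mono hp0.le hpV hV1
  have hsp : Real.sqrt (1 - p^2) = c := by
    have : 1 - p^2 = c^2 := by nlinarith
    rw [this, Real.sqrt_sq hc0.le]
  have harg : c*p/Real.sqrt (1-p^2) = p := by
    rw [hsp]; field_simp
  have step2 : arth r - Real.arctan (c*r/Real.sqrt (1-r^2)) ≤ arth p - Real.arctan p := by
    have mono : MonotoneOn (fun t => arth t - Real.arctan (c*t/Real.sqrt (1-t^2))) (Icc r p) := by
      apply monotoneOn_of_deriv_nonneg (convex_Icc r p)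
      · intro t ht
        have ht0 : 0 < t := lt_of_lt_of_le hr0 ht.1
        have ht1 : t < 1 := lt_of_le_of_lt ht.2 hp1
        exact (((hasDerivAt_arth (by linarith) ht1).sub
          (hasDerivAt_inner ht0 ht1)).continuousAt).continuousWithinAt
      · intro t ht
        rw [interior_Icc] at ht
        have ht0 : 0 < t := lt_trans hr0 ht.1
        have ht1 : t < 1 := lt_trans ht.2 hp1
        exact (((hasDerivAt_arth (by linarith) ht1).sub
          (hasDerivAt_inner ht0 ht1)).differentiableAt).differentiableWithinAt
      · intro t ht
        rw [interior_Icc] at ht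
        have ht0 : 0 < t := lt_trans hr0 ht.1
        have ht1 : t < 1 := lt_trans ht.2 hp1
        rw [HasDerivAt.deriv (f := fun t => arth t - Real.arctan (c*t/Real.sqrt (1-t^2))) ((hasDerivAt_arth (by linarith) ht1).sub (hasDerivAt_inner ht0 ht1))]
        have hq0 : (0:ℝ) < 1 - t^2 := by nlinarith
        set x := Real.sqrt (1 - t^2) with hxdef
        have hx0 : 0 < x := Real.sqrt_pos.2 hq0
        have hx2 : x^2 = 1 - t^2 := Real.sq_sqrt hq0.le
        have hx1 : x ≤ 1 := by nlinarith [sq_nonneg (x-1)]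
        have hcx : c*x ≤ 1 := mul_le_one₀ hc1.le hx0.le hx1
        have hw2 : (c*t/x)^2 = c^2*t^2/(1-t^2) := by
          rw [div_pow, hx2]; ring_nf
        have hA0 : (0:ℝ) < 1 - t^2 + c^2*t^2 := by nlinarith [sq_nonneg (c*t)]
        have h1w : 1 + (c*t/x)^2 = (1 - t^2 + c^2*t^2)/(1-t^2) := by
          rw [hw2]; field_simp
        have key : 1/(1+(c*t/x)^2) * (c / ((1-t^2) * x)) ≤ 1/(1-t^2) := by
          rw [h1w, one_div_div]
          have e1 : (1-t^2)/(1 - t^2 + c^2*t^2) * (c / ((1-t^2) * x))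
              = c/((1 - t^2 + c^2*t^2)*x) := by
            field_simp
          rw [e1, div_le_div_iff₀ (by positivity) hq0]
          have inner : c*x ≤ x^2 + c^2*(1-x^2) := by
            nlinarith [sq_nonneg (x-c), mul_nonneg (mul_nonneg hc0.le hx0.le) (sub_nonneg.2 hcx)]
          have hmain : c*(1-t^2) ≤ (1 - t^2 + c^2*t^2)*x := by
            have ht2 : t^2 = 1 - x^2 := by linarith
            rw [ht2]
            calc c*(1-(1-x^2)) = (c*x)*x := by ring
              _ ≤ (x^2 + c^2*(1-x^2))*x := mul_le_mul_of_nonneg_right inner hx0.le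
              _ = (1-(1-x^2) + c^2*(1-x^2))*x := by ring
          linarith [hmain]
        linarith
    have := mono (left_mem_Icc.2 hrp.le) (right_mem_Icc.2 hrp.le) hrp.le
    simpa [harg] using this
  linarith

lemma static_lemma {m : ℕ} (hm : 2 ≤ m) {α C T r q d : ℝ} (hα : 0 < α)
    (hαm : 1 ≤ α*m) (hC : 0 < C) (hT : 0 < T) (hr : 0 < r) (hr1 : r < 1)
    (hq : q = 1 - r^2) (hd0 : 0 < d) (hdC : d < C)
    (hODE : r^m * d = T^m * q^(1/(2*α)))
    (hcase : r ≤ T ∨ 1 ≤ C) : T * Real.sqrt q ≤ C^α * r := by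
  have hq0 : 0 < q := by rw [hq]; nlinarith
  have hq1 : q ≤ 1 := by rw [hq]; nlinarith
  have hm0 : (0:ℝ) < (m:ℝ) := by positivity
  have hm0' : m ≠ 0 := by omega
  have hqrp : (0:ℝ) < q^(1/(2*α)) := Real.rpow_pos_of_pos hq0 _
  have hsq : Real.sqrt q = q^((1:ℝ)/2) := Real.sqrt_eq_rpow q
  rcases hcase with hrT | hC1
  · -- case r ≤ T
    have hTm : (0:ℝ) < T^m := pow_pos hT m
    have hrm : (0:ℝ) < r^m := pow_pos hr m
    have hrT0 : 0 < r/T := div_pos hr hT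
    have hrT1 : r/T ≤ 1 := (div_le_one hT).2 hrT
    have key1 : q^(1/(2*α)) ≤ C * (r/T)^m := by
      have h1 : T^m * q^(1/(2*α)) ≤ C * r^m := by
        rw [← hODE]; nlinarith [hrm]
      rw [div_pow, ← mul_div_assoc, le_div_iff₀ hTm]
      calc q^(1/(2*α)) * T^m = T^m * q^(1/(2*α)) := by ring
        _ ≤ C * r^m := h1
    have h2 : (q^(1/(2*α)))^α = q^((1:ℝ)/2) := by
      rw [← Real.rpow_mul hq0.le]
      congr 1
      field_simp
    have h3 : (C * (r/T)^m)^α = C^α * ((r/T)^m)^α :=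
      Real.mul_rpow hC.le (pow_nonneg hrT0.le m)
    have h4 : ((r/T)^m)^α = (r/T)^((m:ℝ)*α) := by
      rw [← Real.rpow_natCast (r/T) m, ← Real.rpow_mul hrT0.le]
    have h5 : (r/T)^((m:ℝ)*α) ≤ (r/T) := by
      have := Real.rpow_le_rpow_of_exponent_ge hrT0 hrT1 (by nlinarith : (1:ℝ) ≤ (m:ℝ)*α)
      simpa using this
    have key2 : q^((1:ℝ)/2) ≤ C^α * (r/T) := by
      calc q^((1:ℝ)/2) = (q^(1/(2*α)))^α := h2.symm
        _ ≤ (C * (r/T)^m)^α := Real.rpow_le_rpow hqrp.le key1 hα.le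
        _ = C^α * ((r/T)^m)^α := h3
        _ = C^α * (r/T)^((m:ℝ)*α) := by rw [h4]
        _ ≤ C^α * (r/T) := by
            apply mul_le_mul_of_nonneg_left h5 (Real.rpow_nonneg hC.le α)
    rw [hsq]
    calc T * q^((1:ℝ)/2) ≤ T * (C^α * (r/T)) :=
          mul_le_mul_of_nonneg_left key2 hT.le
      _ = C^α * r := by field_simp
  · -- case 1 ≤ C
    have hrm : (0:ℝ) < r^m := pow_pos hr m
    set f := T * Real.sqrt q / r with hfdef
    have hf0 : 0 ≤ f := by positivity
    have hsqm : (Real.sqrt q)^m = q^(((1:ℝ)/2)*(m:ℝ)) := by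
      rw [hsq, ← Real.rpow_natCast (q^((1:ℝ)/2)) m, ← Real.rpow_mul hq0.le]
    have hid : f^m * q^(1/(2*α)) = d * q^(((1:ℝ)/2)*(m:ℝ)) := by
      rw [hfdef, div_pow, mul_pow, hsqm]
      rw [div_mul_eq_mul_div, div_eq_iff (ne_of_gt hrm)]
      calc T^m * q^(((1:ℝ)/2)*(m:ℝ)) * q^(1/(2*α))
          = (T^m * q^(1/(2*α))) * q^(((1:ℝ)/2)*(m:ℝ)) := by ring
        _ = (r^m * d) * q^(((1:ℝ)/2)*(m:ℝ)) := by rw [hODE]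
        _ = d * q^(((1:ℝ)/2)*(m:ℝ)) * r^m := by ring
    have hexp : 1/(2*α) ≤ ((1:ℝ)/2)*(m:ℝ) := by
      rw [div_le_iff₀ (by positivity : (0:ℝ) < 2*α)]
      nlinarith
    have hle : q^(((1:ℝ)/2)*(m:ℝ)) ≤ q^(1/(2*α)) :=
      Real.rpow_le_rpow_of_exponent_ge hq0 hq1 hexp
    have hfm : f^m ≤ d := by
      have h1 : f^m * q^(1/(2*α)) ≤ d * q^(1/(2*α)) := by
        rw [hid]
        exact mul_le_mul_of_nonneg_left hle hd0.le
      exact le_of_mul_le_mul_right h1 hqrp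
    have hfC : f ≤ C^α := by
      have h1 : f = (f^m)^((m:ℝ)⁻¹) := (Real.pow_rpow_inv_natCast hf0 hm0').symm
      have h2 : (f^m)^((m:ℝ)⁻¹) ≤ C^((m:ℝ)⁻¹) :=
        Real.rpow_le_rpow (pow_nonneg hf0 m) (le_of_lt (lt_of_le_of_lt hfm hdC))
          (by positivity)
      have h3 : C^((m:ℝ)⁻¹) ≤ C^α := by
        apply Real.rpow_le_rpow_of_exponent_le hC1
        rw [inv_eq_one_div, div_le_iff₀ hm0]
        nlinarith
      calc f = (f^m)^((m:ℝ)⁻¹) := h1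
        _ ≤ C^((m:ℝ)⁻¹) := h2
        _ ≤ C^α := h3
    calc T * Real.sqrt q = f * r := by rw [hfdef]; field_simp
      _ ≤ C^α * r := mul_le_mul_of_nonneg_right hfC hr.le

lemma lemZ {T q r c : ℝ} (hq : 0 < q) (hc : 0 < c) (h : T * Real.sqrt q ≤ c * r) :
    c⁻¹ * T ≤ r / Real.sqrt q := by
  have hs : 0 < Real.sqrt q := Real.sqrt_pos.2 hq
  rw [le_div_iff₀ hs]
  calc c⁻¹ * T * Real.sqrt q = c⁻¹ * (T * Real.sqrt q) := by ring
    _ ≤ c⁻¹ * (c * r) := mul_le_mul_of_nonneg_left h (by positivity)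
    _ = r := by field_simp

set_option maxHeartbeats 2000000 in
lemma alpha_contra (n : ℕ) (hn : 2 < n) (α : ℝ) (hα : 1 ≤ α * ((n : ℝ) - 1))
    (C : ℝ) (hC : 0 < C) (ρ ρ' : ℝ → ℝ)
    (hρrange : ∀ s ∈ Set.Ioo (0:ℝ) (π/2), ρ s ∈ Set.Ioo (0:ℝ) 1)
    (hderiv : ∀ s ∈ Set.Ioo (0:ℝ) (π/2), HasDerivAt ρ (ρ' s) s)
    (hODE : ∀ s ∈ Set.Ioo (0:ℝ) (π/2),
      ρ s ^ (n - 1) * ρ' s = Real.tan s ^ (n - 1) * (1 - ρ s ^ 2) ^ (1/(2*α)))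
    (hρ'bound : ∀ s ∈ Set.Ioo (0:ℝ) (π/2), 0 < ρ' s ∧ ρ' s < C)
    (hhalf : 1/2 < α) : False := by
  have hα0 : 0 < α := by linarith
  have hpi : (0:ℝ) < π := Real.pi_pos
  set p : ℝ := 1 - 1/(2*α) with hpdef
  have hp0 : 0 < p := by
    rw [hpdef, sub_pos, div_lt_one (by positivity)]; linarith
  have h2a : 2 - 1/α = 2*p := by rw [hpdef]; field_simp
  have h2a0 : 0 < 2 - 1/α := by rw [h2a]; linarith
  set K : ℝ → ℝ := fun s => (1 - ρ s^2)^p + (2-1/α)*(Real.tan s - s) with hK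
  set M : ℝ := max 2 (π/2 + (|K (π/4)| + 1)/(2-1/α)) with hM
  set b := Real.arctan M with hb
  have hM2 : 2 ≤ M := le_max_left _ _
  have hb2 : b < π/2 := Real.arctan_lt_pi_div_two M
  have hb1 : π/4 < b := by
    rw [hb, ← Real.arctan_one]
    exact Real.arctan_strictMono (by linarith)
  have htanb : Real.tan b = M := Real.tan_arctan M
  have hsub : Icc (π/4) b ⊆ Ioo 0 (π/2) := by
    intro x hx
    exact ⟨by linarith [hx.1], by linarith [hx.2]⟩
  -- derivative of K
  have hKderiv : ∀ x ∈ Ioo 0 (π/2), π/4 ≤ x → HasDerivAt K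
      (p * (1 - ρ x^2)^(p-1) * (-(2*ρ x*ρ' x)) + (2-1/α)*(1/Real.cos x^2 - 1)) x := by
    intro x hx hx4
    have hcos : Real.cos x ≠ 0 := by
      have : 0 < Real.cos x := Real.cos_pos_of_mem_Ioo ⟨by linarith [hx.1], hx.2⟩
      exact ne_of_gt this
    have hq0 : 0 < 1 - ρ x^2 := by
      have := hρrange x hx; nlinarith [this.1, this.2]
    have d1 : HasDerivAt (fun s => 1 - ρ s^2) (-(2*ρ x*ρ' x)) x := by
      have := ((hderiv x hx).pow 2).const_sub 1
      simpa using this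
    have d2 : HasDerivAt (fun y : ℝ => y^p) (p * (1 - ρ x^2)^(p-1)) (1 - ρ x^2) :=
      Real.hasDerivAt_rpow_const (Or.inl (ne_of_gt hq0))
    have d3 : HasDerivAt (fun s => (1 - ρ s^2)^p) (p * (1 - ρ x^2)^(p-1) * (-(2*ρ x*ρ' x))) x :=
      by have := d2.comp x d1; exact this
    have d4 : HasDerivAt (fun s => Real.tan s - s) (1/Real.cos x^2 - 1) x :=
      (Real.hasDerivAt_tan hcos).sub (hasDerivAt_id x)
    exact d3.add (d4.const_mul _)
  -- K is antitone on Icc (π/4) b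
  have hanti : AntitoneOn K (Icc (π/4) b) := by
    apply antitoneOn_of_deriv_nonpos (convex_Icc _ _)
    · intro x hx
      exact (hKderiv x (hsub hx) hx.1).continuousAt.continuousWithinAt
    · intro x hx
      rw [interior_Icc] at hx
      exact (hKderiv x (hsub ⟨hx.1.le, hx.2.le⟩) hx.1.le).differentiableAt.differentiableWithinAt
    · intro x hx
      rw [interior_Icc] at hx
      have hxm : x ∈ Ioo 0 (π/2) := hsub ⟨hx.1.le, hx.2.le⟩
      rw [(hKderiv x hxm hx.1.le).deriv]
      -- show nonpositive
      have hcos : 0 < Real.cos x := Real.cos_pos_of_mem_Ioo ⟨by linarith [hxm.1], hxm.2⟩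
      have hrr := hρrange x hxm
      have hr0 : 0 < ρ x := hrr.1
      have hr1 : ρ x < 1 := hrr.2
      have hq0 : 0 < 1 - ρ x^2 := by nlinarith
      have hd0 : 0 < ρ' x := (hρ'bound x hxm).1
      have hT1 : 1 ≤ Real.tan x := by
        rw [← Real.tan_pi_div_four]
        rcases eq_or_lt_of_le hx.1.le with h | h
        · rw [h]
        · exact le_of_lt (Real.strictMonoOn_tan ⟨by linarith, by linarith [hxm.2]⟩
            ⟨by linarith [hxm.1], hxm.2⟩ h)
      have htansq : 1/Real.cos x^2 - 1 = Real.tan x^2 := by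
        have := Real.inv_one_add_tan_sq (ne_of_gt hcos)
        field_simp at this ⊢
        nlinarith [this]
      rw [htansq]
      -- key: tan x ^2 ≤ (1-ρx^2)^(p-1) * (ρ x * ρ' x)
      have key : Real.tan x^2 ≤ (1 - ρ x^2)^(p-1) * (ρ x * ρ' x) := by
        have hm1 : 1 ≤ n - 1 := by omega
        have hODEx := hODE x hxm
        have e0 : ρ x^(n-1) = ρ x^(n-1-1) * ρ x := by
          rw [← pow_succ]
          congr 1
          omega
        have e2 : (1 - ρ x^2)^(p-1) * (1 - ρ x^2)^(1/(2*α)) = 1 := by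
          rw [← Real.rpow_add hq0]
          have : p - 1 + 1/(2*α) = 0 := by rw [hpdef]; ring
          rw [this, Real.rpow_zero]
        have hrm1 : ρ x^(n-1-1) ≤ 1 := by
          apply pow_le_one₀ hr0.le hr1.le
        have hrm0 : 0 < ρ x^(n-1-1) := pow_pos hr0 _
        have hTm : Real.tan x^2 ≤ Real.tan x^(n-1) := pow_le_pow_right₀ hT1 (by omega)
        have big : (1 - ρ x^2)^(p-1) * (ρ x * ρ' x) * ρ x^(n-1-1) = Real.tan x^(n-1) := by
          calc (1 - ρ x^2)^(p-1) * (ρ x * ρ' x) * ρ x^(n-1-1)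
              = (1 - ρ x^2)^(p-1) * (ρ x^(n-1-1) * ρ x * ρ' x) := by ring
            _ = (1 - ρ x^2)^(p-1) * (ρ x^(n-1) * ρ' x) := by rw [← e0]
            _ = (1 - ρ x^2)^(p-1) * (Real.tan x^(n-1) * (1 - ρ x^2)^(1/(2*α))) := by
                rw [hODEx]
            _ = Real.tan x^(n-1) * ((1 - ρ x^2)^(p-1) * (1 - ρ x^2)^(1/(2*α))) := by ring
            _ = Real.tan x^(n-1) := by rw [e2, mul_one]
        have hpos : 0 < (1 - ρ x^2)^(p-1) * (ρ x * ρ' x) := by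
          apply mul_pos (Real.rpow_pos_of_pos hq0 _) (mul_pos hr0 hd0)
        have final := mul_le_mul_of_nonneg_left hrm1 hpos.le
        rw [mul_one] at final
        linarith [hTm, big, final]
      rw [h2a]
      nlinarith [mul_le_mul_of_nonneg_left key hp0.le]
  -- conclude
  have hKb : K b ≤ K (π/4) := hanti (left_mem_Icc.2 hb1.le) (right_mem_Icc.2 hb1.le) hb1.le
  have hqb : 0 < (1 - ρ b^2)^p := by
    have hrr := hρrange b ⟨by linarith, hb2⟩
    exact Real.rpow_pos_of_pos (by nlinarith [hrr.1, hrr.2]) _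
  have hKb2 : (2-1/α)*(M - b) < K b := by
    have hKbeq : K b = (1 - ρ b^2)^p + (2-1/α)*(Real.tan b - b) := rfl
    rw [hKbeq, htanb]
    linarith [hqb]
  have hMlarge : π/2 + (|K (π/4)| + 1)/(2-1/α) ≤ M := le_max_right _ _
  have : |K (π/4)| + 1 ≤ (2-1/α)*(M - π/2) := by
    rw [← div_le_iff₀' h2a0]
    linarith [hMlarge]
  have habs : K (π/4) ≤ |K (π/4)| := le_abs_self _
  have hmb : (2-1/α)*(M-π/2) ≤ (2-1/α)*(M-b) :=
    mul_le_mul_of_nonneg_left (by linarith) h2a0.le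
  linarith [hKb, hKb2, this, habs, hmb]

set_option maxHeartbeats 2000000 in
lemma part1 (n : ℕ) (hn : 2 < n) (α : ℝ) (hα : 1 ≤ α * ((n : ℝ) - 1))
    (C : ℝ) (hC : 0 < C) (ρ ρ' : ℝ → ℝ)
    (hρrange : ∀ s ∈ Set.Ioo (0:ℝ) (π/2), ρ s ∈ Set.Ioo (0:ℝ) 1)
    (hderiv : ∀ s ∈ Set.Ioo (0:ℝ) (π/2), HasDerivAt ρ (ρ' s) s)
    (hODE : ∀ s ∈ Set.Ioo (0:ℝ) (π/2),
      ρ s ^ (n - 1) * ρ' s = Real.tan s ^ (n - 1) * (1 - ρ s ^ 2) ^ (1/(2*α)))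
    (hρ'bound : ∀ s ∈ Set.Ioo (0:ℝ) (π/2), 0 < ρ' s ∧ ρ' s < C) :
    ∀ u ∈ Set.Ioo (0:ℝ) (π/2),
      C ^ (-α) * Real.tan u ≤ ρ u / Real.sqrt (1 - ρ u ^ 2) := by
  have hpi : (0:ℝ) < π := Real.pi_pos
  have hn' : (2:ℝ) < (n:ℝ) := by exact_mod_cast hn
  have hα0 : 0 < α := by nlinarith
  have hm2 : 2 ≤ n - 1 := by omega
  have hcast : ((n-1 : ℕ):ℝ) = (n:ℝ) - 1 := by
    rw [Nat.cast_sub (by omega)]; norm_num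
  have hαm : 1 ≤ α * ((n-1 : ℕ):ℝ) := by rw [hcast]; exact hα
  intro u hu
  obtain ⟨hu0, hu2⟩ := hu
  have hum : u ∈ Ioo (0:ℝ) (π/2) := ⟨hu0, hu2⟩
  have hTu : 0 < Real.tan u := Real.tan_pos_of_pos_of_lt_pi_div_two hu0 hu2
  obtain ⟨hr0, hr1⟩ := hρrange u hum
  have hq0 : (0:ℝ) < 1 - ρ u^2 := by nlinarith
  have hsqu : 0 < Real.sqrt (1 - ρ u^2) := Real.sqrt_pos.2 hq0
  obtain ⟨hd0, hdC⟩ := hρ'bound u hum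
  have hCa : (0:ℝ) < C^α := Real.rpow_pos_of_pos hC α
  rw [Real.rpow_neg hC.le]
  by_cases hhalf : 1/2 < α
  · exact absurd (alpha_contra n hn α hα C hC ρ ρ' hρrange hderiv hODE hρ'bound hhalf)
      not_false
  push_neg at hhalf
  by_cases hcase : ρ u ≤ Real.tan u ∨ 1 ≤ C
  · exact lemZ hq0 hCa (static_lemma hm2 hα0 hαm hC hTu hr0 hr1 rfl hd0 hdC
      (hODE u hum) hcase)
  push_neg at hcase
  obtain ⟨hrT, hC1⟩ := hcase
  by_contra hbad
  push_neg at hbad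
  -- setup
  set c := C^α with hcdef
  have hc0 : 0 < c := hCa
  have hc1 : c < 1 := Real.rpow_lt_one hC.le hC1 hα0
  have hbad' : c * ρ u < Real.tan u * Real.sqrt (1 - ρ u^2) := by
    rw [div_lt_iff₀ hsqu] at hbad
    have h1 := mul_lt_mul_of_pos_left hbad hc0
    calc c * ρ u < c * (c⁻¹ * Real.tan u * Real.sqrt (1 - ρ u^2)) := h1
      _ = Real.tan u * Real.sqrt (1 - ρ u^2) := by field_simp
  have hcq : c < Real.sqrt (1 - ρ u^2) := by
    have h1 : Real.tan u * Real.sqrt (1 - ρ u^2) < ρ u * Real.sqrt (1 - ρ u^2) :=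
      mul_lt_mul_of_pos_right hrT hsqu
    have h2 : c * ρ u < ρ u * Real.sqrt (1 - ρ u^2) := lt_trans hbad' h1
    nlinarith
  have hq_c : ρ u^2 < 1 - c^2 := by
    have h1 : c^2 < Real.sqrt (1 - ρ u^2)^2 := by
      apply pow_lt_pow_left₀ hcq hc0.le
      norm_num
    rw [Real.sq_sqrt hq0.le] at h1
    linarith
  have hu4 : u < π/4 := by
    by_contra h
    push_neg at h
    have h1 : (1:ℝ) ≤ Real.tan u := by
      rw [← Real.tan_pi_div_four]
      rcases eq_or_lt_of_le h with h' | h'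
      · rw [h']
      · exact le_of_lt (Real.strictMonoOn_tan ⟨by linarith, by linarith⟩
          ⟨by linarith, hu2⟩ h')
    linarith [hrT, hr1]
  -- the crossing point v
  have hsub4 : Icc u (π/4) ⊆ Ioo 0 (π/2) := fun x hx =>
    ⟨by linarith [hx.1], by linarith [hx.2]⟩
  have hconts : ContinuousOn (fun s => ρ s - Real.tan s) (Icc u (π/4)) := by
    intro s hs
    have hsm := hsub4 hs
    have hcos : Real.cos s ≠ 0 := by
      have : 0 < Real.cos s := Real.cos_pos_of_mem_Ioo ⟨by linarith [hsm.1], hsm.2⟩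
      exact ne_of_gt this
    exact ((hderiv s hsm).continuousAt.sub (Real.continuousAt_tan.2 hcos)).continuousWithinAt
  set Z := {s | s ∈ Icc u (π/4) ∧ ρ s ≤ Real.tan s} with hZdef
  have hZeq : Z = Icc u (π/4) ∩ (fun s => ρ s - Real.tan s) ⁻¹' (Iic 0) := by
    ext s
    simp only [hZdef, mem_setOf_eq, mem_inter_iff, mem_preimage, mem_Iic, sub_nonpos]
  have hZclosed : IsClosed Z := by
    rw [hZeq]
    exact hconts.preimage_isClosed_of_isClosed isClosed_Icc isClosed_Iic
  have hpi4m : (π/4 : ℝ) ∈ Ioo 0 (π/2) := ⟨by linarith, by linarith⟩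
  have hZne : (π/4 : ℝ) ∈ Z := by
    refine ⟨⟨hu4.le, le_refl _⟩, ?_⟩
    rw [Real.tan_pi_div_four]
    exact (hρrange _ hpi4m).2.le
  have hZbdd : BddBelow Z := ⟨u, fun z hz => hz.1.1⟩
  set v := sInf Z with hvdef
  have hvZ : v ∈ Z := hZclosed.csInf_mem ⟨_, hZne⟩ hZbdd
  have huv : u ≤ v := le_csInf ⟨_, hZne⟩ (fun z hz => hz.1.1)
  have hvne : u ≠ v := by
    intro h
    rw [← h] at hvZ
    exact absurd hvZ.2 (not_le.2 hrT)
  have huv' : u < v := lt_of_le_of_ne huv hvne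
  have hv4 : v ≤ π/4 := hvZ.1.2
  have hvm : v ∈ Ioo 0 (π/2) := ⟨by linarith, by linarith⟩
  have hbefore : ∀ s, u ≤ s → s < v → Real.tan s < ρ s := by
    intro s hs1 hs2
    by_contra h
    push_neg at h
    have hsZ : s ∈ Z := ⟨⟨hs1, le_trans hs2.le hv4⟩, h⟩
    exact absurd (csInf_le hZbdd hsZ) (not_le.2 hs2)
  have hvge : Real.tan v ≤ ρ v := by
    have hne : (nhdsWithin v (Ico u v)).NeBot := by
      rw [← mem_closure_iff_nhdsWithin_neBot, closure_Ico (ne_of_lt huv')]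
      exact ⟨huv, le_refl v⟩
    have hcv : ContinuousWithinAt (fun s => ρ s - Real.tan s) (Ico u v) v := by
      apply (hconts v ⟨huv, hv4⟩).mono
      intro x hx
      exact ⟨hx.1, le_trans hx.2.le hv4⟩
    have hev : ∀ᶠ s in nhdsWithin v (Ico u v), 0 ≤ ρ s - Real.tan s :=
      eventually_nhdsWithin_of_forall
        (fun s hs => le_of_lt (sub_pos.2 (hbefore s hs.1 hs.2)))
    have h0 : (0:ℝ) ≤ ρ v - Real.tan v := ge_of_tendsto hcv hev
    linarith
  have hveq : ρ v = Real.tan v := le_antisymm hvZ.2 hvge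
  -- static lemma at v
  obtain ⟨hrv0, hrv1⟩ := hρrange v hvm
  have hqv0 : (0:ℝ) < 1 - ρ v^2 := by nlinarith
  have hTv : 0 < Real.tan v := Real.tan_pos_of_pos_of_lt_pi_div_two hvm.1 hvm.2
  obtain ⟨hdv0, hdvC⟩ := hρ'bound v hvm
  have hstat := static_lemma hm2 hα0 hαm hC hTv hrv0 hrv1 rfl hdv0 hdvC
    (hODE v hvm) (Or.inl hvZ.2)
  have hqvc : Real.sqrt (1 - ρ v^2) ≤ c := by
    have h1 : Real.tan v * Real.sqrt (1 - ρ v^2) ≤ Real.tan v * c := by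
      calc Real.tan v * Real.sqrt (1 - ρ v^2) ≤ c * ρ v := hstat
        _ ≤ c * Real.tan v := mul_le_mul_of_nonneg_left hvZ.2 hc0.le
        _ = Real.tan v * c := mul_comm _ _
    exact le_of_mul_le_mul_left h1 hTv
  have hVc : 1 - ρ v^2 ≤ c^2 := by
    have h1 : Real.sqrt (1 - ρ v^2)^2 ≤ c^2 :=
      pow_le_pow_left₀ (Real.sqrt_nonneg _) hqvc 2
    rw [Real.sq_sqrt hqv0.le] at h1
    exact h1
  -- F antitone
  have hFderiv : ∀ x ∈ Ioo (0:ℝ) (π/2), HasDerivAt (fun s => arth (ρ s) - s)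
      (1/(1 - ρ x^2) * ρ' x - 1) x := by
    intro x hx
    obtain ⟨hx0, hx1⟩ := hρrange x hx
    have h1 : HasDerivAt (fun s => arth (ρ s)) (1/(1 - ρ x^2) * ρ' x) x :=
      (hasDerivAt_arth (by linarith) hx1).comp x (hderiv x hx)
    exact h1.sub (hasDerivAt_id x)
  have hsubv : Icc u v ⊆ Ioo 0 (π/2) := fun x hx =>
    ⟨by linarith [hx.1], by linarith [hx.2]⟩
  have hFanti : AntitoneOn (fun s => arth (ρ s) - s) (Icc u v) := by
    apply antitoneOn_of_deriv_nonpos (convex_Icc u v)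
    · intro x hx
      exact (hFderiv x (hsubv hx)).continuousAt.continuousWithinAt
    · intro x hx
      rw [interior_Icc] at hx
      exact (hFderiv x (hsubv ⟨hx.1.le, hx.2.le⟩)).differentiableAt.differentiableWithinAt
    · intro x hx
      rw [interior_Icc] at hx
      have hxm : x ∈ Ioo (0:ℝ) (π/2) := hsubv ⟨hx.1.le, hx.2.le⟩
      rw [(hFderiv x hxm).deriv]
      obtain ⟨hx0, hx1⟩ := hρrange x hxm
      have hqx0 : (0:ℝ) < 1 - ρ x^2 := by nlinarith
      have hqx1 : 1 - ρ x^2 ≤ 1 := by nlinarith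
      have hTx : 0 < Real.tan x := Real.tan_pos_of_pos_of_lt_pi_div_two hxm.1 hxm.2
      have hTr : Real.tan x < ρ x := hbefore x hx.1.le hx.2
      have hODEx := hODE x hxm
      have hrpow : (0:ℝ) ≤ (1 - ρ x^2)^(1/(2*α)) := (Real.rpow_pos_of_pos hqx0 _).le
      have h1 : ρ x^(n-1) * ρ' x ≤ ρ x^(n-1) * (1 - ρ x^2)^(1/(2*α)) := by
        rw [hODEx]
        exact mul_le_mul_of_nonneg_right (pow_le_pow_left₀ hTx.le hTr.le (n-1)) hrpow
      have h2 : ρ' x ≤ (1 - ρ x^2)^(1/(2*α)) :=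
        le_of_mul_le_mul_left (by linarith [h1]) (pow_pos hx0 (n-1))
      have hexp : (1:ℝ) ≤ 1/(2*α) := by
        rw [le_div_iff₀ (by positivity)]
        linarith
      have h3 : (1 - ρ x^2)^(1/(2*α)) ≤ 1 - ρ x^2 := by
        have := Real.rpow_le_rpow_of_exponent_ge hqx0 hqx1 hexp
        rwa [Real.rpow_one] at this
      have h4 : ρ' x ≤ 1 - ρ x^2 := le_trans h2 h3
      have h5 : 1/(1 - ρ x^2) * ρ' x ≤ 1 := by
        rw [div_mul_eq_mul_div, one_mul, div_le_one hqx0]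
        exact h4
      linarith
  have hchain : arth (ρ v) - v ≤ arth (ρ u) - u :=
    hFanti (left_mem_Icc.2 huv) (right_mem_Icc.2 huv) huv
  -- lemE
  have hlemE := lemE hc0 hc1 hr0 hq_c hrv0 hrv1 hVc
  have harcv : Real.arctan (ρ v) = v := by
    rw [hveq, Real.arctan_tan (by linarith [hvm.1]) hvm.2]
  have ht : c * ρ u / Real.sqrt (1 - ρ u^2) < Real.tan u := by
    rw [div_lt_iff₀ hsqu]
    linarith [hbad']
  have harc : Real.arctan (c * ρ u / Real.sqrt (1 - ρ u^2)) < u := by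
    calc Real.arctan (c * ρ u / Real.sqrt (1 - ρ u^2)) < Real.arctan (Real.tan u) :=
          Real.arctan_strictMono ht
      _ = u := Real.arctan_tan (by linarith) hu2
  rw [harcv] at hlemE
  linarith [hchain, hlemE, harc]

lemma my_integral_tan {a b : ℝ} (ha : 0 < a) (hab : a ≤ b) (hb : b < π/2) :
    ∫ x in a..b, Real.tan x = Real.log (Real.cos a) - Real.log (Real.cos b) := by
  have hpi : (0:ℝ) < π := Real.pi_pos
  have hsub : ∀ x ∈ uIcc a b, 0 < Real.cos x := by
    intro x hx
    rw [uIcc_of_le hab] at hx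
    exact Real.cos_pos_of_mem_Ioo ⟨by linarith [hx.1], by linarith [hx.2]⟩
  have hder : ∀ x ∈ uIcc a b, HasDerivAt (fun y => -Real.log (Real.cos y)) (Real.tan x) x := by
    intro x hx
    have hc := hsub x hx
    have h1 : HasDerivAt (fun y => Real.log (Real.cos y)) (-Real.sin x / Real.cos x) x :=
      (Real.hasDerivAt_cos x).log (ne_of_gt hc)
    have h2 := h1.neg
    rw [Real.tan_eq_sin_div_cos]
    exact h2.congr_deriv (by ring)
  have hint : IntervalIntegrable (fun x => Real.tan x) MeasureTheory.volume a b := by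
    apply ContinuousOn.intervalIntegrable
    intro x hx
    exact (Real.continuousAt_tan.2 (ne_of_gt (hsub x hx))).continuousWithinAt
  have := intervalIntegral.integral_eq_sub_of_hasDerivAt hder hint
  rw [this]
  ring

set_option maxHeartbeats 1000000 in
lemma part2 (n : ℕ) (hn : 2 < n) (α : ℝ) (hα : 1 ≤ α * ((n : ℝ) - 1))
    (C : ℝ) (hC : 0 < C) (ρ ρ' : ℝ → ℝ)
    (hρrange : ∀ s ∈ Set.Ioo (0:ℝ) (π/2), ρ s ∈ Set.Ioo (0:ℝ) 1)
    (hderiv : ∀ s ∈ Set.Ioo (0:ℝ) (π/2), HasDerivAt ρ (ρ' s) s)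
    (hρ'bound : ∀ s ∈ Set.Ioo (0:ℝ) (π/2), 0 < ρ' s ∧ ρ' s < C)
    (hbound : ∀ u ∈ Set.Ioo (0:ℝ) (π/2),
      C ^ (-α) * Real.tan u ≤ ρ u / Real.sqrt (1 - ρ u ^ 2)) :
    Tendsto (fun s : ℝ => ∫ u in (0:ℝ)..s, ρ u / Real.sqrt (1 - ρ u ^ 2))
      (nhdsWithin (π/2) (Set.Iio (π/2))) atTop := by
  have hpi : (0:ℝ) < π := Real.pi_pos
  set f := fun u => ρ u / Real.sqrt (1 - ρ u ^ 2) with hfdef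
  set a := π/3 with hadef
  have ham : a ∈ Ioo (0:ℝ) (π/2) := ⟨by linarith, by linarith⟩
  have hmono : MonotoneOn ρ (Ioo 0 (π/2)) := by
    apply monotoneOn_of_deriv_nonneg (convex_Ioo _ _)
    · exact fun s hs => (hderiv s hs).continuousAt.continuousWithinAt
    · intro s hs
      rw [interior_Ioo] at hs
      exact (hderiv s hs).differentiableAt.differentiableWithinAt
    · intro s hs
      rw [interior_Ioo] at hs
      rw [(hderiv s hs).deriv]
      exact (hρ'bound s hs).1.le
  have hfcont : ∀ s ∈ Ioo (0:ℝ) (π/2), ContinuousAt f s := by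
    intro s hs
    obtain ⟨h0, h1⟩ := hρrange s hs
    have hq0 : 0 < 1 - ρ s^2 := by nlinarith
    have h2 : ContinuousAt ρ s := (hderiv s hs).continuousAt
    exact (h2.div ((Real.continuous_sqrt.continuousAt).comp
      (continuousAt_const.sub (h2.pow 2))) (ne_of_gt (Real.sqrt_pos.2 hq0)))
  have hf_nonneg : ∀ s ∈ Ioo (0:ℝ) (π/2), 0 ≤ f s := fun s hs =>
    div_nonneg (hρrange s hs).1.le (Real.sqrt_nonneg _)
  obtain ⟨hra0, hra1⟩ := hρrange a ham
  have hqa0 : 0 < 1 - ρ a^2 := by nlinarith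
  have hIa : IntervalIntegrable f MeasureTheory.volume 0 a := by
    rw [intervalIntegrable_iff_integrableOn_Ioc_of_le (le_of_lt ham.1)]
    have hmeas : MeasurableSet (Ioc (0:ℝ) a) := measurableSet_Ioc
    have hcont : ContinuousOn f (Ioc 0 a) := fun s hs =>
      (hfcont s ⟨hs.1, lt_of_le_of_lt hs.2 ham.2⟩).continuousWithinAt
    apply MeasureTheory.Integrable.mono'
      (g := fun _ => 1/Real.sqrt (1 - ρ a^2))
    · exact MeasureTheory.integrableOn_const measure_Ioc_lt_top.ne
    · exact hcont.aestronglyMeasurable hmeas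
    · rw [MeasureTheory.ae_restrict_iff' hmeas]
      refine MeasureTheory.ae_of_all _ (fun s hs => ?_)
      have hsm : s ∈ Ioo (0:ℝ) (π/2) := ⟨hs.1, lt_of_le_of_lt hs.2 ham.2⟩
      obtain ⟨hs0, hs1⟩ := hρrange s hsm
      have hqs0 : 0 < 1 - ρ s^2 := by nlinarith
      have hle : ρ s ≤ ρ a := hmono hsm ham hs.2
      have h1 : Real.sqrt (1 - ρ a^2) ≤ Real.sqrt (1 - ρ s^2) :=
        Real.sqrt_le_sqrt (by nlinarith)
      rw [Real.norm_eq_abs, abs_of_nonneg (hf_nonneg s hsm)]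
      exact div_le_div₀ zero_le_one hs1.le (Real.sqrt_pos.2 hqa0) h1
  have hInt0 : 0 ≤ ∫ u in (0:ℝ)..a, f u := by
    rw [intervalIntegral.integral_of_le (le_of_lt ham.1)]
    apply MeasureTheory.setIntegral_nonneg measurableSet_Ioc
    intro x hx
    exact hf_nonneg x ⟨hx.1, lt_of_le_of_lt hx.2 ham.2⟩
  have hmain : ∀ s ∈ Ioo a (π/2),
      C^(-α) * (Real.log (Real.cos a) - Real.log (Real.cos s)) ≤ ∫ u in (0:ℝ)..s, f u := by
    intro s hs
    have hsubs : Icc a s ⊆ Ioo (0:ℝ) (π/2) := fun x hx =>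
      ⟨lt_of_lt_of_le ham.1 hx.1, lt_of_le_of_lt hx.2 hs.2⟩
    have hIas : IntervalIntegrable f MeasureTheory.volume a s := by
      apply ContinuousOn.intervalIntegrable
      rw [uIcc_of_le hs.1.le]
      exact fun x hx => (hfcont x (hsubs hx)).continuousWithinAt
    have hItan : IntervalIntegrable (fun x => C^(-α) * Real.tan x) MeasureTheory.volume a s := by
      apply ContinuousOn.intervalIntegrable
      rw [uIcc_of_le hs.1.le]
      intro x hx
      have hxm := hsubs hx
      have hcos : Real.cos x ≠ 0 :=
        ne_of_gt (Real.cos_pos_of_mem_Ioo ⟨by linarith [hxm.1], hxm.2⟩)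
      exact (continuousAt_const.mul (Real.continuousAt_tan.2 hcos)).continuousWithinAt
    have hmono2 : ∫ x in a..s, C^(-α) * Real.tan x ≤ ∫ x in a..s, f x := by
      apply intervalIntegral.integral_mono_on hs.1.le hItan hIas
      intro x hx
      exact hbound x (hsubs hx)
    have heq : ∫ x in a..s, C^(-α) * Real.tan x
        = C^(-α) * (Real.log (Real.cos a) - Real.log (Real.cos s)) := by
      rw [intervalIntegral.integral_const_mul, my_integral_tan ham.1 hs.1.le hs.2]
    have hsplit : ∫ u in (0:ℝ)..s, f u = (∫ u in (0:ℝ)..a, f u) + ∫ u in a..s, f u :=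
      (intervalIntegral.integral_add_adjacent_intervals hIa hIas).symm
    rw [hsplit, ← heq]
    linarith [hInt0, hmono2]
  have hlog : Tendsto (fun s => Real.log (Real.cos s)) (nhdsWithin (π/2) (Iio (π/2))) atBot := by
    apply Real.tendsto_log_nhdsGT_zero.comp
    apply tendsto_nhdsWithin_of_tendsto_nhds_of_eventually_within
    · have h1 : Tendsto Real.cos (nhds (π/2)) (nhds (Real.cos (π/2))) :=
        Real.continuous_cos.continuousAt
      rw [Real.cos_pi_div_two] at h1
      exact h1.mono_left nhdsWithin_le_nhds
    · have hmem : Ioo (0:ℝ) (π/2) ∈ nhdsWithin (π/2) (Iio (π/2)) :=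
        Ioo_mem_nhdsLT_of_mem ⟨by linarith, le_refl _⟩
      filter_upwards [hmem] with x hx
      exact Real.cos_pos_of_mem_Ioo ⟨by linarith [hx.1], hx.2⟩
  have hC' : 0 < C^(-α) := Real.rpow_pos_of_pos hC _
  have htends : Tendsto (fun s => C^(-α) * (Real.log (Real.cos a) - Real.log (Real.cos s)))
      (nhdsWithin (π/2) (Iio (π/2))) atTop := by
    apply Tendsto.const_mul_atTop hC'
    have h1 : Tendsto (fun s => -Real.log (Real.cos s)) (nhdsWithin (π/2) (Iio (π/2))) atTop :=
      tendsto_neg_atBot_atTop.comp hlog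
    have h2 := tendsto_atTop_add_const_left _ (Real.log (Real.cos a)) h1
    simpa [sub_eq_add_neg] using h2
  have hev : (fun s => C^(-α) * (Real.log (Real.cos a) - Real.log (Real.cos s)))
      ≤ᶠ[nhdsWithin (π/2) (Iio (π/2))] (fun s => ∫ u in (0:ℝ)..s, f u) := by
    filter_upwards [Ioo_mem_nhdsLT_of_mem (show (π/2:ℝ) ∈ Ioc a (π/2) from ⟨by linarith, le_refl _⟩)]
      with s hs
    exact hmain s hs
  exact tendsto_atTop_mono' _ hev htends

/-- If α(n−1) ≥ 1, ρ : (0,π/2) → (0,1) satisfies ρ^(n−1) ρ' = (tan s)^(n−1) (1−ρ²)^(1/(2α))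
with 0 < ρ' < C, then ρ/√(1−ρ²) ≥ C^(−α)·tan u, so ∫₀^s ρ/√(1−ρ²) → +∞ as s → (π/2)⁻. -/
theorem stmt_15 (n : ℕ) (hn : 2 < n) (α : ℝ) (hα : 1 ≤ α * ((n : ℝ) - 1))
    (C : ℝ) (hC : 0 < C) (ρ ρ' : ℝ → ℝ)
    (hρrange : ∀ s ∈ Set.Ioo (0:ℝ) (π/2), ρ s ∈ Set.Ioo (0:ℝ) 1)
    (hderiv : ∀ s ∈ Set.Ioo (0:ℝ) (π/2), HasDerivAt ρ (ρ' s) s)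
    (hODE : ∀ s ∈ Set.Ioo (0:ℝ) (π/2),
      ρ s ^ (n - 1) * ρ' s = Real.tan s ^ (n - 1) * (1 - ρ s ^ 2) ^ (1/(2*α)))
    (hρ'bound : ∀ s ∈ Set.Ioo (0:ℝ) (π/2), 0 < ρ' s ∧ ρ' s < C) :
    (∀ u ∈ Set.Ioo (0:ℝ) (π/2),
        C ^ (-α) * Real.tan u ≤ ρ u / Real.sqrt (1 - ρ u ^ 2)) ∧
      Tendsto (fun s : ℝ => ∫ u in (0:ℝ)..s, ρ u / Real.sqrt (1 - ρ u ^ 2))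
        (nhdsWithin (π/2) (Set.Iio (π/2))) atTop := by
  have h1 := part1 n hn α hα C hC ρ ρ' hρrange hderiv hODE hρ'bound
  exact ⟨h1, part2 n hn α hα C hC ρ ρ' hρrange hderiv hρ'bound h1⟩
end
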